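/- Let G be a graph with at least one edge whose cut monoid M_G is normal. Then: (a) if G is bipartite, then m(G) = 2; (b) if G contains no triangle but has an induced cycle of odd length, then m(G) ≥ 3; (c) if G contains a triangle, then m(G) = 4. (Via the Danilov–Stanley description of the canonical module, these are equivalent to reg K[G] = |E| − 1, reg K[G] ≤ |E| − 2, and reg K[G] = |E| − 3, respectively.) -/

import Mathlib

/-! Basic definitions for cut monoids of finite simple graphs. -/

open Classical in
/-- The cut vector of a vertex set `A`, as a function on `Sym2 V`:
value `1` on pairs with exactly one element in `A`, and `0` otherwise. -/
noncomputable def cutVec {V : Type} (A : Set V) : Sym2 V → ℤ :=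
  Sym2.lift ⟨fun v w => if ((v ∈ A) ↔ (w ∈ A)) then 0 else 1,
    fun v w => if_congr iff_comm rfl rfl⟩

variable {V : Type}

/-- The generators `(δ_A, 1)` of the cut monoid of `G`. -/
def cutGens (G : SimpleGraph V) : Set ((G.edgeSet → ℤ) × ℤ) :=
  {p | ∃ A : Set V, p = (fun e => cutVec A e.1, 1)}

/-- The cut monoid `M_G` of a graph `G`. -/
def cutMonoid (G : SimpleGraph V) : AddSubmonoid ((G.edgeSet → ℤ) × ℤ) :=
  AddSubmonoid.closure (cutGens G)

/-- The group `gp(M_G)` generated by the cut monoid. -/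
def cutGroup (G : SimpleGraph V) : AddSubgroup ((G.edgeSet → ℤ) × ℤ) :=
  AddSubgroup.closure (cutGens G)

/-- `M_G` is normal: every `x ∈ gp(M_G)` with `n • x ∈ M_G` for some `n ≥ 1` lies in `M_G`. -/
def CutNormal (G : SimpleGraph V) : Prop :=
  ∀ x ∈ cutGroup G, (∃ n : ℕ, 1 ≤ n ∧ n • x ∈ cutMonoid G) → x ∈ cutMonoid G

/-- `M_G` is seminormal: every `x ∈ gp(M_G)` with `2 • x ∈ M_G` and `3 • x ∈ M_G`
lies in `M_G`. -/
def CutSeminormal (G : SimpleGraph V) : Prop :=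
  ∀ x ∈ cutGroup G, 2 • x ∈ cutMonoid G → 3 • x ∈ cutMonoid G → x ∈ cutMonoid G

/-- Generators of the cone of `M_G`: nonnegative real multiples of the `(δ_A, 1)`. -/
noncomputable def cutConeGens (G : SimpleGraph V) : Set ((G.edgeSet → ℝ) × ℝ) :=
  {q | ∃ (c : ℝ) (A : Set V), 0 ≤ c ∧
    q = c • ((fun e => ((cutVec A e.1 : ℤ) : ℝ), (1 : ℝ)))}

/-- The cone `cone(M_G)`: all finite nonnegative real combinations of the `(δ_A, 1)`. -/
noncomputable def cutCone (G : SimpleGraph V) : Set ((G.edgeSet → ℝ) × ℝ) :=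
  (AddSubmonoid.closure (cutConeGens G) : Set ((G.edgeSet → ℝ) × ℝ))

/-- The canonical map from `ℤ^E × ℤ` to `ℝ^E × ℝ`. -/
noncomputable def toRealCut (G : SimpleGraph V) (p : (G.edgeSet → ℤ) × ℤ) :
    (G.edgeSet → ℝ) × ℝ :=
  (fun e => ((p.1 e : ℤ) : ℝ), ((p.2 : ℤ) : ℝ))

/-- `int(M_G)`: elements of `M_G` mapping into the topological interior of `cone(M_G)`. -/
noncomputable def cutInterior (G : SimpleGraph V) : Set ((G.edgeSet → ℤ) × ℤ) :=
  {p | p ∈ cutMonoid G ∧ toRealCut G p ∈ interior (cutCone G)}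

/-- The set of last coordinates `α ∈ ℕ` realized by elements of `int(M_G)`;
its least element is `m(G)`. -/
noncomputable def cutDegrees (G : SimpleGraph V) : Set ℕ :=
  {α | ∃ x : G.edgeSet → ℤ, ((x, (α : ℤ)) : (G.edgeSet → ℤ) × ℤ) ∈ cutInterior G}

/-- `H` is a minor of `G`: branch sets `B u` are nonempty, pairwise disjoint,
induce connected subgraphs, and edges of `H` are witnessed by edges of `G`. -/
def GraphMinor {W V : Type} (H : SimpleGraph W) (G : SimpleGraph V) : Prop :=
  ∃ B : W → Set V,
    (∀ u, (B u).Nonempty) ∧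
    (∀ u v, u ≠ v → Disjoint (B u) (B v)) ∧
    (∀ u, (G.induce (B u)).Connected) ∧
    (∀ u v, H.Adj u v → ∃ a ∈ B u, ∃ b ∈ B v, G.Adj a b)

/-- `G` is `K₅`-minor-free. -/
def K5Free (G : SimpleGraph V) : Prop :=
  ¬ GraphMinor (⊤ : SimpleGraph (Fin 5)) G

/-- `G` is bipartite: vertices split into two parts so every edge joins the parts. -/
def BipartiteG (G : SimpleGraph V) : Prop :=
  ∃ s : Set V, ∀ ⦃v w⦄, G.Adj v w → ((v ∈ s ∧ w ∉ s) ∨ (w ∈ s ∧ v ∉ s))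

/-- `G` has an induced cycle of length `n` (n ≥ 3): an induced-subgraph copy of the
cycle graph of length `n`. -/
def HasInducedCycleLen (G : SimpleGraph V) (n : ℕ) : Prop :=
  3 ≤ n ∧ Nonempty (SimpleGraph.cycleGraph n ↪g G)

/-- `G` contains a triangle. -/
def HasTriangle (G : SimpleGraph V) : Prop :=
  ∃ a b c, G.Adj a b ∧ G.Adj b c ∧ G.Adj a c

/-- `G` is chordal: every induced cycle is a triangle. -/
def ChordalG (G : SimpleGraph V) : Prop :=
  ∀ n, HasInducedCycleLen G n → n = 3

/-- `G` is bridgeless: every edge lies on some cycle. -/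
def BridgelessG (G : SimpleGraph V) : Prop :=
  ∀ e ∈ G.edgeSet, ∃ (v : V) (c : G.Walk v v), c.IsCycle ∧ e ∈ c.edges

/-- `G` is (isomorphic to) a cycle of length `n`. -/
def IsCycleOfLen (G : SimpleGraph V) (n : ℕ) : Prop :=
  3 ≤ n ∧ Nonempty (G ≃g SimpleGraph.cycleGraph n)

/-- `G` is a cycle. -/
def IsCycleGraph (G : SimpleGraph V) : Prop :=
  ∃ n, IsCycleOfLen G n

/-- `G` is a `0`-sum of `G1` and `G2`: copies of `G1`, `G2` cover `G`,
overlap in exactly one vertex, and every edge comes from `G1` or `G2`. -/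
def IsZeroSumDecomp {V1 V2 : Type} (G : SimpleGraph V) (G1 : SimpleGraph V1)
    (G2 : SimpleGraph V2) : Prop :=
  ∃ (f1 : V1 ↪ V) (f2 : V2 ↪ V),
    Set.range f1 ∪ Set.range f2 = Set.univ ∧
    (∃ v, Set.range f1 ∩ Set.range f2 = {v}) ∧
    (∀ a b, G.Adj a b ↔
      ((∃ x y, f1 x = a ∧ f1 y = b ∧ G1.Adj x y) ∨
       (∃ x y, f2 x = a ∧ f2 y = b ∧ G2.Adj x y)))

/-- `G` is a `1`-sum of `G1` and `G2` along a common edge. -/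
def IsOneSumDecomp {V1 V2 : Type} (G : SimpleGraph V) (G1 : SimpleGraph V1)
    (G2 : SimpleGraph V2) : Prop :=
  ∃ (f1 : V1 ↪ V) (f2 : V2 ↪ V) (v w : V),
    v ≠ w ∧
    Set.range f1 ∪ Set.range f2 = Set.univ ∧
    Set.range f1 ∩ Set.range f2 = {v, w} ∧
    (∃ x y, f1 x = v ∧ f1 y = w ∧ G1.Adj x y) ∧
    (∃ x y, f2 x = v ∧ f2 y = w ∧ G2.Adj x y) ∧
    (∀ a b, G.Adj a b ↔
      ((∃ x y, f1 x = a ∧ f1 y = b ∧ G1.Adj x y) ∨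
       (∃ x y, f2 x = a ∧ f2 y = b ∧ G2.Adj x y)))

/-- Ring graphs: obtained, up to adding isolated vertices, from finitely many
(finite) trees and cycles by iterated `0`-sums and `1`-sums. -/
inductive IsRingGraph : {V : Type} → SimpleGraph V → Prop
  | tree {V : Type} (G : SimpleGraph V) :
      Finite V → G.Connected → G.IsAcyclic → IsRingGraph G
  | cycle {V : Type} (G : SimpleGraph V) : IsCycleGraph G → IsRingGraph G
  | zeroSum {V1 V2 V : Type} {G1 : SimpleGraph V1} {G2 : SimpleGraph V2}
      {G : SimpleGraph V} :
      IsRingGraph G1 → IsRingGraph G2 → IsZeroSumDecomp G G1 G2 → IsRingGraph G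
  | oneSum {V1 V2 V : Type} {G1 : SimpleGraph V1} {G2 : SimpleGraph V2}
      {G : SimpleGraph V} :
      IsRingGraph G1 → IsRingGraph G2 → IsOneSumDecomp G G1 G2 → IsRingGraph G
  | addIsolated {V W : Type} {G : SimpleGraph V} {H : SimpleGraph W} (f : V ↪ W) :
      IsRingGraph G → (∀ a b, H.Adj a b ↔ ∃ x y, f x = a ∧ f y = b ∧ G.Adj x y) →
      IsRingGraph H

/-- An edge of an induced subgraph is an edge of the ambient graph. -/
lemma induce_edge_mem (G : SimpleGraph V) (s : Set V) (e : Sym2 s)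
    (he : e ∈ (G.induce s).edgeSet) : e.map Subtype.val ∈ G.edgeSet := by
  induction e using Sym2.ind with
  | _ a b =>
    rw [Sym2.map_pair_eq, SimpleGraph.mem_edgeSet]
    exact he

/-- Restriction of a vector indexed by the edges of `G` to the edges of the
subgraph of `G` induced on `s`. -/
noncomputable def restrictCut (G : SimpleGraph V) (s : Set V) (p : G.edgeSet → ℤ) :
    (G.induce s).edgeSet → ℤ :=
  fun e => p ⟨e.1.map Subtype.val, induce_edge_mem G s e.1 e.2⟩

/-!
Every cut vector satisfies `0 ≤ δ_e ≤ 1`, `δ_ab ≤ δ_bc + δ_ca` and `δ_ab + δ_bc + δ_ca ≤ 2`,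
so an interior point `(x, α)` of the cone satisfies these inequalities strictly (scaled by `α`).
Moreover a cut meets every closed walk in an even number of edges, so the coordinates of an
element of `M_G` have even sum along any closed walk. Hence `α ≥ 2`; `α = 2` forces `x = 1`,
which has odd sum along an odd cycle; and on a triangle, parity together with the strict
inequalities excludes `α ≤ 3`.

Conversely, the points `(t, …, t, 2t)` with `t > 0` are positive multiples of the sum of all
generators, which span the whole space, so they are interior. For a bipartition `S` the point
with `t = 1` is `(δ_S, 1) + (δ_∅, 1)`. The point with `t = 2` lies in `gp(M_G)` (each
`(2 e_uv, 1) = (δ_u, 1) + (δ_v, 1) - (δ_{u,v}, 1)` lies there) and a multiple of it is a multiple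
of the sum of all generators, so normality puts it in `M_G`.
-/

open Classical

section CutVec

lemma cutVec_mk (A : Set V) (x y : V) :
    cutVec A s(x, y) = if (x ∈ A ↔ y ∈ A) then 0 else 1 := by
  simp [cutVec]

lemma cutVec_nonneg (A : Set V) (e : Sym2 V) : 0 ≤ cutVec A e := by
  induction e using Sym2.ind with
  | _ x y => rw [cutVec_mk]; split <;> omega

lemma cutVec_le_one (A : Set V) (e : Sym2 V) : cutVec A e ≤ 1 := by
  induction e using Sym2.ind with
  | _ x y => rw [cutVec_mk]; split <;> omega

@[simp]
lemma cutVec_empty (e : Sym2 V) : cutVec (∅ : Set V) e = 0 := by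
  induction e using Sym2.ind with
  | _ x y => simp [cutVec_mk]

lemma cutVec_le_add (A : Set V) (a b c : V) :
    cutVec A s(a, b) ≤ cutVec A s(b, c) + cutVec A s(c, a) := by
  simp only [cutVec_mk]; split_ifs <;> first | omega | tauto

lemma cutVec_add_add_le_two (A : Set V) (a b c : V) :
    cutVec A s(a, b) + cutVec A s(b, c) + cutVec A s(c, a) ≤ 2 := by
  simp only [cutVec_mk]; split_ifs <;> first | omega | tauto

lemma cutVec_cast_zmod_two (A : Set V) (x y : V) :
    (cutVec A s(x, y) : ZMod 2) = (if x ∈ A then 1 else 0) + (if y ∈ A then 1 else 0) := by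
  rw [cutVec_mk]
  by_cases hx : x ∈ A <;> by_cases hy : y ∈ A <;> simp [hx, hy]
  decide

lemma cutVec_singleton_add_sub_pair {u v x y : V} (huv : u ≠ v) (hxy : x ≠ y) :
    cutVec {u} s(x, y) + cutVec {v} s(x, y) - cutVec {u, v} s(x, y) =
      if s(x, y) = s(u, v) then 2 else 0 := by
  simp only [cutVec_mk, Sym2.eq_iff, Set.mem_singleton_iff, Set.mem_insert_iff]
  by_cases hxu : x = u <;> by_cases hxv : x = v <;> by_cases hyu : y = u <;>
    by_cases hyv : y = v <;> simp_all

/-- Toggling `u` matches the vertex sets separating `u` from `v` with those that do not. -/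
lemma two_mul_sum_cutVec [Fintype V] {u v : V} (huv : u ≠ v) :
    2 * ∑ A : Set V, cutVec A s(u, v) = 2 ^ Fintype.card V := by
  have htoggle : ∀ A : Set V, cutVec A s(u, v) + cutVec (symmDiff A {u}) s(u, v) = 1 := by
    intro A
    by_cases hu : u ∈ A <;> by_cases hv : v ∈ A <;>
      simp [cutVec_mk, Set.mem_symmDiff, hu, hv, huv.symm]
  have hinv : Function.Involutive (fun A : Set V => symmDiff A {u}) :=
    fun A => symmDiff_symmDiff_cancel_right {u} A
  calc 2 * ∑ A : Set V, cutVec A s(u, v)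
      = ∑ A : Set V, (cutVec A s(u, v) + cutVec (symmDiff A {u}) s(u, v)) := by
        rw [Finset.sum_add_distrib, ← Equiv.sum_comp hinv.toPerm (fun A => cutVec A s(u, v))]
        simp only [Function.Involutive.coe_toPerm]
        ring
    _ = 2 ^ Fintype.card V := by simp [htoggle, Fintype.card_set]

end CutVec

section Monoid

variable {G : SimpleGraph V}

variable (G) in
noncomputable def cutGen (A : Set V) : (G.edgeSet → ℤ) × ℤ :=
  (fun e => cutVec A e.1, 1)

lemma cutGen_mem_cutMonoid (A : Set V) : cutGen G A ∈ cutMonoid G :=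
  AddSubmonoid.subset_closure ⟨A, rfl⟩

lemma cutGen_mem_cutGroup (A : Set V) : cutGen G A ∈ cutGroup G :=
  AddSubgroup.subset_closure ⟨A, rfl⟩

variable (G) in
def uniformPoint (t : ℤ) : (G.edgeSet → ℤ) × ℤ :=
  (fun _ => t, 2 * t)

lemma uniformPoint_one_mem_cutMonoid_of_bipartite (hG : BipartiteG G) :
    uniformPoint G 1 ∈ cutMonoid G := by
  obtain ⟨s, hs⟩ := hG
  have hsplit : cutGen G s + cutGen G ∅ = uniformPoint G 1 := by
    refine Prod.ext (funext fun ⟨e, he⟩ => ?_) rfl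
    induction e using Sym2.ind with
    | _ x y =>
      rcases hs he with ⟨hx, hy⟩ | ⟨hy, hx⟩ <;>
        simp [cutGen, uniformPoint, cutVec_mk, hx, hy]
  exact hsplit ▸ add_mem (cutGen_mem_cutMonoid s) (cutGen_mem_cutMonoid ∅)

lemma cutGen_singleton_add_sub_pair {u v : V} (h : G.Adj u v) :
    cutGen G {u} + cutGen G {v} - cutGen G {u, v} = (Pi.single ⟨s(u, v), h⟩ 2, 1) := by
  refine Prod.ext (funext fun ⟨e, he⟩ => ?_) (by simp [cutGen])
  induction e using Sym2.ind with
  | _ x y =>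
    simp only [cutGen, Prod.fst_sub, Prod.fst_add, Pi.sub_apply, Pi.add_apply, Pi.single_apply]
    rw [if_congr Subtype.ext_iff rfl rfl]
    exact cutVec_singleton_add_sub_pair (G.ne_of_adj h) (G.ne_of_adj he)

lemma single_two_mem_cutGroup (e : G.edgeSet) : (Pi.single e 2, 1) ∈ cutGroup G := by
  obtain ⟨e, he⟩ := e
  induction e using Sym2.ind with
  | _ u v =>
    rw [← cutGen_singleton_add_sub_pair he]
    exact sub_mem (add_mem (cutGen_mem_cutGroup _) (cutGen_mem_cutGroup _)) (cutGen_mem_cutGroup _)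

lemma uniformPoint_two_mem_cutGroup [Fintype V] : uniformPoint G 2 ∈ cutGroup G := by
  have hsum : ∑ e : G.edgeSet, ((Pi.single e 2, 1) : (G.edgeSet → ℤ) × ℤ) +
      (4 - Fintype.card G.edgeSet : ℤ) • cutGen G ∅ = uniformPoint G 2 := by
    refine Prod.ext ?_ ?_
    · simp only [Prod.fst_add, Prod.fst_sum, Prod.smul_fst, cutGen, cutVec_empty,
        Finset.univ_sum_single (fun _ : G.edgeSet => (2 : ℤ))]
      ext; simp [uniformPoint]
    · simp [cutGen, uniformPoint, Prod.snd_sum]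
  exact hsum ▸ add_mem (sum_mem fun e _ => single_two_mem_cutGroup e)
    (zsmul_mem (cutGen_mem_cutGroup ∅) _)

lemma two_pow_card_smul_uniformPoint_one [Fintype V] :
    2 ^ Fintype.card V • uniformPoint G 1 = 2 • ∑ A : Set V, cutGen G A := by
  refine Prod.ext (funext fun ⟨e, he⟩ => ?_) ?_
  · induction e using Sym2.ind with
    | _ u v =>
      simp [cutGen, uniformPoint, Prod.fst_sum, Finset.sum_apply,
        two_mul_sum_cutVec (G.ne_of_adj he)]
  · simp [cutGen, uniformPoint, Prod.snd_sum, Fintype.card_set, mul_comm]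

lemma uniformPoint_two_mem_cutMonoid_of_cutNormal [Fintype V] (hG : CutNormal G) :
    uniformPoint G 2 ∈ cutMonoid G := by
  refine hG _ uniformPoint_two_mem_cutGroup ⟨2 ^ Fintype.card V, Nat.one_le_two_pow, ?_⟩
  have htwo : uniformPoint G 2 = 2 • uniformPoint G 1 := by
    ext <;> simp [uniformPoint]
  rw [htwo, smul_comm, two_pow_card_smul_uniformPoint_one]
  exact nsmul_mem (nsmul_mem (sum_mem fun A _ => cutGen_mem_cutMonoid A) _) _

/-- A cut meets every closed walk in an even number of edges. -/
lemma even_sum_of_mem_cutMonoid {n : ℕ} [NeZero n] {v : Fin n → V} {E : Fin n → G.edgeSet}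
    (hE : ∀ i, (E i).1 = s(v i, v (i + 1))) {p : (G.edgeSet → ℤ) × ℤ} (hp : p ∈ cutMonoid G) :
    Even (∑ i, p.1 (E i)) := by
  rw [← ZMod.intCast_eq_zero_iff_even]
  push_cast
  induction hp using AddSubmonoid.closure_induction with
  | mem x hx =>
    obtain ⟨A, rfl⟩ := hx
    simp only [hE, cutVec_cast_zmod_two, Finset.sum_add_distrib]
    rw [Fintype.sum_equiv (Equiv.addRight 1) (fun i => if v (i + 1) ∈ A then (1 : ZMod 2) else 0)
      (fun i => if v i ∈ A then 1 else 0) fun _ => rfl]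
    exact CharTwo.add_self_eq_zero _
  | zero => simp
  | add x y _ _ hx hy => simp [Finset.sum_add_distrib, hx, hy]

end Monoid

section Interior

variable {E : Type*} [AddCommGroup E] [Module ℝ E] [TopologicalSpace E] [IsTopologicalAddGroup E]
  [ContinuousSMul ℝ E]

/-- A nonzero functional is surjective, hence an open map. -/
lemma pos_of_mem_interior {C : Set E} {φ : E →ₗ[ℝ] ℝ} (hφ : φ ≠ 0) (hC : ∀ x ∈ C, 0 ≤ φ x)
    {p : E} (hp : p ∈ interior C) : 0 < φ p := by
  have hopen := φ.isOpenMap_of_finiteDimensional (LinearMap.surjective hφ)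
  have himage : φ '' interior C ⊆ interior (Set.Ici 0) :=
    interior_maximal (Set.image_subset_iff.mpr fun x hx => hC x (interior_subset hx))
      (hopen _ isOpen_interior)
  rw [interior_Ici] at himage
  exact himage ⟨p, hp, rfl⟩

lemma sum_smul_mem_interior [T2Space E] [FiniteDimensional ℝ E] {ι : Type*} [Fintype ι]
    {v : ι → E} (hv : Submodule.span ℝ (Set.range v) = ⊤) {C : Set E}
    (hC : ∀ c : ι → ℝ, (∀ i, 0 ≤ c i) → ∑ i, c i • v i ∈ C) {c : ι → ℝ} (hc : ∀ i, 0 < c i) :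
    ∑ i, c i • v i ∈ interior C := by
  set f := Fintype.linearCombination ℝ v
  have hopen := f.isOpenMap_of_finiteDimensional
    ((span_range_eq_top_iff_surjective_fintypeLinearCombination ℝ v).mp hv)
  have himage : f '' Set.univ.pi (fun _ => Set.Ioi 0) ⊆ C := by
    rintro _ ⟨c', hc', rfl⟩
    simpa [f, Fintype.linearCombination_apply] using hC c' fun i => (hc' i trivial).le
  refine interior_maximal himage (hopen _ (isOpen_set_pi Set.finite_univ fun _ _ => isOpen_Ioi))
    ⟨c, fun i _ => hc i, ?_⟩
  simp [f, Fintype.linearCombination_apply]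

end Interior

section Cone

variable {G : SimpleGraph V}

variable (G) in
noncomputable def coneGen (A : Set V) : (G.edgeSet → ℝ) × ℝ :=
  (fun e => (cutVec A e.1 : ℝ), 1)

lemma sum_smul_coneGen_mem_cutCone [Fintype V] {c : Set V → ℝ} (hc : ∀ A, 0 ≤ c A) :
    ∑ A, c A • coneGen G A ∈ cutCone G :=
  sum_mem fun A _ => AddSubmonoid.subset_closure ⟨c A, A, hc A, rfl⟩

lemma nonneg_of_mem_cutCone {φ : ((G.edgeSet → ℝ) × ℝ) →ₗ[ℝ] ℝ}
    (hφ : ∀ A, 0 ≤ φ (coneGen G A)) {q : (G.edgeSet → ℝ) × ℝ} (hq : q ∈ cutCone G) :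
    0 ≤ φ q := by
  induction hq using AddSubmonoid.closure_induction with
  | mem x hx =>
    obtain ⟨c, A, hc, rfl⟩ := hx
    rw [map_smul]
    exact mul_nonneg hc (hφ A)
  | zero => simp
  | add x y _ _ hx hy => simpa using add_nonneg hx hy

variable (G) in
noncomputable def toRealCutHom : ((G.edgeSet → ℤ) × ℤ) →+ ((G.edgeSet → ℝ) × ℝ) :=
  (AddMonoidHom.compLeft (Int.castAddHom ℝ) G.edgeSet).prodMap (Int.castAddHom ℝ)

lemma toRealCutHom_apply (p : (G.edgeSet → ℤ) × ℤ) : toRealCutHom G p = toRealCut G p := rfl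

lemma toRealCut_mem_span_coneGen {p : (G.edgeSet → ℤ) × ℤ} (hp : p ∈ cutGroup G) :
    toRealCut G p ∈ Submodule.span ℝ (Set.range (coneGen G)) := by
  suffices cutGroup G ≤
      ((Submodule.span ℝ (Set.range (coneGen G))).toAddSubgroup.comap (toRealCutHom G)) from
    this hp
  refine (AddSubgroup.closure_le _).mpr ?_
  rintro _ ⟨A, rfl⟩
  refine Submodule.subset_span ⟨A, ?_⟩
  ext <;> simp [coneGen, toRealCutHom_apply, toRealCut]

lemma span_coneGen_eq_top [Fintype V] :
    Submodule.span ℝ (Set.range (coneGen G)) = ⊤ := by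
  refine Submodule.eq_top_iff'.mpr fun q => ?_
  have hdecomp : q = ∑ e, (q.1 e / 2) • (toRealCut G (Pi.single e 2, 1) - coneGen G ∅) +
      q.2 • coneGen G ∅ := by
    ext e
    · simp [toRealCut, coneGen, Prod.fst_sum, Finset.sum_apply, Pi.single_apply]
    · simp [toRealCut, coneGen, Prod.snd_sum]
  rw [hdecomp]
  refine add_mem (sum_mem fun e _ => Submodule.smul_mem _ _ (sub_mem ?_ ?_))
    (Submodule.smul_mem _ _ (Submodule.subset_span ⟨∅, rfl⟩))
  · exact toRealCut_mem_span_coneGen (single_two_mem_cutGroup e)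
  · exact Submodule.subset_span ⟨∅, rfl⟩

lemma toRealCut_uniformPoint_mem_interior [Fintype V] {t : ℤ} (ht : 0 < t) :
    toRealCut G (uniformPoint G t) ∈ interior (cutCone G) := by
  have hbary : toRealCut G (uniformPoint G t) =
      ∑ A, (2 * t / 2 ^ Fintype.card V : ℝ) • coneGen G A := by
    refine Prod.ext (funext fun ⟨e, he⟩ => ?_) ?_
    · induction e using Sym2.ind with
      | _ u v =>
        have hsum : 2 * ∑ A : Set V, (cutVec A s(u, v) : ℝ) = 2 ^ Fintype.card V := by
          exact_mod_cast two_mul_sum_cutVec (G.ne_of_adj he)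
        simp only [toRealCut, uniformPoint, coneGen, Prod.fst_sum, Prod.smul_fst,
          Finset.sum_apply, Pi.smul_apply, smul_eq_mul, ← Finset.mul_sum]
        field_simp
        linarith
    · simp [toRealCut, uniformPoint, coneGen, Prod.snd_sum, Fintype.card_set]
      field_simp
  rw [hbary]
  exact sum_smul_mem_interior (v := coneGen G) (c := fun _ => 2 * t / 2 ^ Fintype.card V)
    span_coneGen_eq_top (fun c hc => sum_smul_coneGen_mem_cutCone hc) fun A => by positivity

end Cone

section Bounds

variable {G : SimpleGraph V} {p : (G.edgeSet → ℤ) × ℤ}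

variable (G) in
def edgeCoord (e : G.edgeSet) : ((G.edgeSet → ℝ) × ℝ) →ₗ[ℝ] ℝ :=
  LinearMap.proj e ∘ₗ LinearMap.fst ℝ _ ℝ

@[simp]
lemma edgeCoord_apply (e : G.edgeSet) (q : (G.edgeSet → ℝ) × ℝ) : edgeCoord G e q = q.1 e := rfl

lemma pos_of_mem_interior_cutCone {φ : ((G.edgeSet → ℝ) × ℝ) →ₗ[ℝ] ℝ}
    (w : (G.edgeSet → ℝ) × ℝ) (hw : φ w ≠ 0) (hφ : ∀ A, 0 ≤ φ (coneGen G A))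
    (hp : toRealCut G p ∈ interior (cutCone G)) : 0 < φ (toRealCut G p) :=
  pos_of_mem_interior (fun h => hw (by simp [h])) (fun _ => nonneg_of_mem_cutCone hφ) hp

lemma fst_pos_of_mem_interior_cutCone (hp : toRealCut G p ∈ interior (cutCone G))
    (e : G.edgeSet) : 0 < p.1 e := by
  have := pos_of_mem_interior_cutCone (φ := edgeCoord G e) (fun _ => 1, 0) (by simp)
    (fun A => by simpa [coneGen] using cutVec_nonneg A e.1) hp
  simpa [toRealCut] using this

lemma fst_lt_snd_of_mem_interior_cutCone (hp : toRealCut G p ∈ interior (cutCone G))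
    (e : G.edgeSet) : p.1 e < p.2 := by
  have := pos_of_mem_interior_cutCone (φ := LinearMap.snd ℝ _ ℝ - edgeCoord G e) (0, 1)
    (by simp) (fun A => by
      simpa [coneGen] using (Int.cast_le (R := ℝ)).mpr (cutVec_le_one A e.1)) hp
  simpa [toRealCut] using this

lemma lt_add_of_mem_interior_cutCone {a b c : V} (hab : G.Adj a b) (hbc : G.Adj b c)
    (hca : G.Adj c a) (hp : toRealCut G p ∈ interior (cutCone G)) :
    p.1 ⟨s(a, b), hab⟩ < p.1 ⟨s(b, c), hbc⟩ + p.1 ⟨s(c, a), hca⟩ := by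
  have := pos_of_mem_interior_cutCone
    (φ := edgeCoord G ⟨s(b, c), hbc⟩ + edgeCoord G ⟨s(c, a), hca⟩ - edgeCoord G ⟨s(a, b), hab⟩)
    (fun _ => 1, 0) (by simp)
    (fun A => by
      have := (Int.cast_le (R := ℝ)).mpr (cutVec_le_add A a b c)
      push_cast at this
      simp [coneGen]
      linarith) hp
  rw [← Int.cast_lt (R := ℝ)]
  push_cast
  simp [toRealCut] at this
  linarith

lemma add_add_lt_of_mem_interior_cutCone {a b c : V} (hab : G.Adj a b) (hbc : G.Adj b c)
    (hca : G.Adj c a) (hp : toRealCut G p ∈ interior (cutCone G)) :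
    p.1 ⟨s(a, b), hab⟩ + p.1 ⟨s(b, c), hbc⟩ + p.1 ⟨s(c, a), hca⟩ < 2 * p.2 := by
  have := pos_of_mem_interior_cutCone (φ := 2 • LinearMap.snd ℝ _ ℝ -
      edgeCoord G ⟨s(a, b), hab⟩ - edgeCoord G ⟨s(b, c), hbc⟩ - edgeCoord G ⟨s(c, a), hca⟩)
    (0, 1) (by simp)
    (fun A => by
      have := (Int.cast_le (R := ℝ)).mpr (cutVec_add_add_le_two A a b c)
      push_cast at this
      simp [coneGen]
      linarith) hp
  rw [← Int.cast_lt (R := ℝ)]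
  push_cast
  simp [toRealCut] at this
  linarith

end Bounds

section Degrees

variable {G : SimpleGraph V}

lemma two_mul_mem_cutDegrees [Fintype V] {t : ℕ} (ht : 0 < t)
    (h : uniformPoint G t ∈ cutMonoid G) : 2 * t ∈ cutDegrees G :=
  ⟨fun _ => t, by push_cast; exact h,
    by push_cast; exact toRealCut_uniformPoint_mem_interior (by exact_mod_cast ht)⟩

lemma two_le_of_mem_cutDegrees (e : G.edgeSet) {b : ℕ} (hb : b ∈ cutDegrees G) : 2 ≤ b := by
  obtain ⟨x, -, hx⟩ := hb
  have h₁ := fst_pos_of_mem_interior_cutCone hx e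
  have h₂ := fst_lt_snd_of_mem_interior_cutCone hx e
  dsimp only at h₁ h₂
  omega

lemma two_notMem_cutDegrees {n : ℕ} [NeZero n] (hn : Odd n) {v : Fin n → V}
    {E : Fin n → G.edgeSet} (hE : ∀ i, (E i).1 = s(v i, v (i + 1))) : 2 ∉ cutDegrees G := by
  rintro ⟨x, hx, hx'⟩
  have hone : ∀ i, x (E i) = 1 := fun i => by
    have h₁ := fst_pos_of_mem_interior_cutCone hx' (E i)
    have h₂ := fst_lt_snd_of_mem_interior_cutCone hx' (E i)
    dsimp only at h₁ h₂
    omega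
  have heven := even_sum_of_mem_cutMonoid hE hx
  simp only [hone, Finset.sum_const, Finset.card_univ, Fintype.card_fin, nsmul_eq_mul,
    mul_one, Int.even_coe_nat] at heven
  exact Nat.not_even_iff_odd.mpr hn heven

lemma four_le_of_mem_cutDegrees {a b c : V} (hab : G.Adj a b) (hbc : G.Adj b c) (hca : G.Adj c a)
    {d : ℕ} (hd : d ∈ cutDegrees G) : 4 ≤ d := by
  obtain ⟨x, hx, hx'⟩ := hd
  have heven := even_sum_of_mem_cutMonoid (v := ![a, b, c])
    (E := ![⟨s(a, b), hab⟩, ⟨s(b, c), hbc⟩, ⟨s(c, a), hca⟩]) (fun i => by fin_cases i <;> rfl) hx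
  simp only [Fin.sum_univ_three, Matrix.cons_val_zero, Matrix.cons_val_one, Matrix.cons_val_two,
    Matrix.head_cons, Matrix.tail_cons, Int.even_iff] at heven
  have h₁ := fst_pos_of_mem_interior_cutCone hx' ⟨s(a, b), hab⟩
  have h₂ := fst_pos_of_mem_interior_cutCone hx' ⟨s(b, c), hbc⟩
  have h₃ := fst_pos_of_mem_interior_cutCone hx' ⟨s(c, a), hca⟩
  have hsum := add_add_lt_of_mem_interior_cutCone hab hbc hca hx'
  have ht₁ := lt_add_of_mem_interior_cutCone hab hbc hca hx'
  have ht₂ := lt_add_of_mem_interior_cutCone hbc hca hab hx'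
  have ht₃ := lt_add_of_mem_interior_cutCone hca hab hbc hx'
  dsimp only at *
  omega

end Degrees

/-- For a graph `G` with at least one edge and normal cut monoid:
(a) if `G` is bipartite then `m(G) = 2`; (b) if `G` has no triangle but has an induced
cycle of odd length then `m(G) ≥ 3`; (c) if `G` contains a triangle then `m(G) = 4`. -/
theorem regularity_main {V : Type} [Fintype V] (G : SimpleGraph V)
    (hedge : G.edgeSet.Nonempty) (hnorm : CutNormal G) :
    (BipartiteG G → IsLeast (cutDegrees G) 2) ∧
    ((¬ HasTriangle G ∧ ∃ n, Odd n ∧ HasInducedCycleLen G n) →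
      ∀ b ∈ cutDegrees G, 3 ≤ b) ∧
    (HasTriangle G → IsLeast (cutDegrees G) 4) := by
  obtain ⟨e, he⟩ := hedge
  have two_le : ∀ b ∈ cutDegrees G, 2 ≤ b := fun b => two_le_of_mem_cutDegrees ⟨e, he⟩
  refine ⟨fun hbip => ⟨?_, two_le⟩, ?_, ?_⟩
  · exact two_mul_mem_cutDegrees one_pos (uniformPoint_one_mem_cutMonoid_of_bipartite hbip)
  · rintro ⟨-, n, hodd, hn, ⟨f⟩⟩ b hb
    obtain ⟨m, rfl⟩ : ∃ m, n = m + 2 := ⟨n - 2, by omega⟩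
    have hadj (i : Fin (m + 2)) : G.Adj (f i) (f (i + 1)) :=
      f.map_rel_iff.mpr (SimpleGraph.cycleGraph_adj.mpr (Or.inr (add_sub_cancel_left i 1)))
    have hne : b ≠ 2 := by
      rintro rfl
      exact two_notMem_cutDegrees hodd (E := fun i => ⟨_, hadj i⟩) (fun _ => rfl) hb
    exact (two_le b hb).lt_of_ne' hne
  · rintro ⟨a, b, c, hab, hbc, hac⟩
    exact ⟨two_mul_mem_cutDegrees two_pos (uniformPoint_two_mem_cutMonoid_of_cutNormal hnorm),
      fun d => four_le_of_mem_cutDegrees hab hbc hac.symm⟩
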